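/- If g is a word in α, α⁻¹, β, β⁻¹ with a(g) = 0, then there exists a complete α-folding of g: a folding in which every occurrence of the letter α is paired (with some occurrence of α⁻¹) and only α-pairs occur. -/

import Mathlib

/-! Common setup: free group on two generators, Heisenberg group of unipotent
upper-triangular 3×3 integer matrices, the Heisenberg invariant. -/

noncomputable section

/-- The free group on two generators. -/
abbrev F : Type := FreeGroup Bool

/-- The generator `α` of the free group. -/
def Wα : F := FreeGroup.of false

/-- The generator `β` of the free group. -/
def Wβ : F := FreeGroup.of true

/-- `F₃`, the third term of the lower central series `F₁ = F`, `F_{n+1} = [F, Fₙ]`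
(Mathlib's `lowerCentralSeries` is 0-indexed). -/
abbrev F₃ : Subgroup F := (⊤ : Subgroup F).lowerCentralSeries 2

/-- `H = F/F₃`. -/
abbrev H : Type := F ⧸ F₃

/-- The unipotent upper-triangular matrix `M(a,b,c)`. -/
def Mmat (a b c : ℤ) : Matrix (Fin 3) (Fin 3) ℤ := !![1, a, c; 0, 1, b; 0, 0, 1]

theorem Mmat_mul (a b c a' b' c' : ℤ) :
    Mmat a b c * Mmat a' b' c' = Mmat (a + a') (b + b') (c + c' + a * b') := by
  simp [Mmat, Matrix.mul_fin_three]; ring_nf; simp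

theorem Mmat_zero : Mmat 0 0 0 = 1 := by
  simp [Mmat, Matrix.one_fin_three]

/-- `M(a,b,c)` as a unit of the matrix ring. -/
def Munit (a b c : ℤ) : (Matrix (Fin 3) (Fin 3) ℤ)ˣ :=
  ⟨Mmat a b c, Mmat (-a) (-b) (a * b - c),
    by rw [Mmat_mul]; rw [show a + -a = 0 by ring, show b + -b = 0 by ring,
      show c + (a*b - c) + a * (-b) = 0 by ring]; exact Mmat_zero,
    by rw [Mmat_mul]; rw [show -a + a = 0 by ring, show -b + b = 0 by ring,
      show (a*b - c) + c + (-a) * b = 0 by ring]; exact Mmat_zero⟩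

theorem Munit_mul (a b c a' b' c' : ℤ) :
    Munit a b c * Munit a' b' c' = Munit (a + a') (b + b') (c + c' + a * b') :=
  Units.ext (Mmat_mul a b c a' b' c')

theorem Munit_one : Munit 0 0 0 = 1 := Units.ext Mmat_zero

theorem Munit_inv (a b c : ℤ) : (Munit a b c)⁻¹ = Munit (-a) (-b) (a * b - c) :=
  Units.ext rfl

theorem Munit_congr {a b c a' b' c' : ℤ} (h1 : a = a') (h2 : b = b') (h3 : c = c') :
    Munit a b c = Munit a' b' c' := by subst h1; subst h2; subst h3; rfl

/-- The integer Heisenberg group, as the subgroup of units of the `3×3` integer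
matrix ring consisting of the unipotent upper-triangular matrices `M(a,b,c)`. -/
def Heis : Subgroup (Matrix (Fin 3) (Fin 3) ℤ)ˣ where
  carrier := {x | ∃ a b c : ℤ, x = Munit a b c}
  one_mem' := ⟨0, 0, 0, Munit_one.symm⟩
  mul_mem' := by
    rintro x y ⟨a, b, c, rfl⟩ ⟨a', b', c', rfl⟩
    exact ⟨_, _, _, Munit_mul a b c a' b' c'⟩
  inv_mem' := by
    rintro x ⟨a, b, c, rfl⟩
    exact ⟨_, _, _, Munit_inv a b c⟩

/-- The homomorphism `Ψ : F → ℍ` with `Ψ(α) = M(1,0,0)` and `Ψ(β) = M(0,1,0)`. -/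
def Ψ : F →* (Matrix (Fin 3) (Fin 3) ℤ)ˣ :=
  FreeGroup.lift fun x => if x then Munit 0 1 0 else Munit 1 0 0

theorem Ψ_mem (g : F) : Ψ g ∈ Heis := by
  induction g using FreeGroup.induction_on with
  | C1 => exact Heis.one_mem
  | of x => cases x <;> · show Ψ (FreeGroup.of _) ∈ Heis; rw [Ψ, FreeGroup.lift_apply_of]; exact ⟨_, _, _, rfl⟩
  | inv_of x hx => rw [map_inv]; exact Heis.inv_mem hx
  | mul x y hx hy => rw [map_mul]; exact Heis.mul_mem hx hy

open scoped commutatorElement in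
theorem Munit_commutator (a b c a' b' c' : ℤ) :
    ⁅Munit a b c, Munit a' b' c'⁆ = Munit 0 0 (a * b' - a' * b) := by
  rw [commutatorElement_def, Munit_inv, Munit_inv, Munit_mul, Munit_mul, Munit_mul]
  exact Munit_congr (by ring) (by ring) (by ring)

theorem Munit_central (z a b c : ℤ) : Munit 0 0 z * Munit a b c = Munit a b c * Munit 0 0 z := by
  rw [Munit_mul, Munit_mul]; exact Munit_congr (by ring) (by ring) (by ring)

theorem Heis_comm_central (g : F) (hg : g ∈ (⁅(⊤ : Subgroup F), ⊤⁆ : Subgroup F)) :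
    Ψ g ∈ Subgroup.centralizer (Heis : Set (Matrix (Fin 3) (Fin 3) ℤ)ˣ) := by
  have hle : (⁅(⊤ : Subgroup F), ⊤⁆ : Subgroup F) ≤
      Subgroup.comap Ψ (Subgroup.centralizer (Heis : Set (Matrix (Fin 3) (Fin 3) ℤ)ˣ)) := by
    rw [Subgroup.commutator_le]
    intro g₁ _ g₂ _
    rw [Subgroup.mem_comap, map_commutatorElement]
    obtain ⟨a, b, c, h1⟩ := Ψ_mem g₁
    obtain ⟨a', b', c', h2⟩ := Ψ_mem g₂
    rw [h1, h2, Munit_commutator]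
    rw [Subgroup.mem_centralizer_iff]
    rintro x ⟨p, q, r, rfl⟩
    exact (Munit_central _ _ _ _).symm
  exact hle hg

theorem F₃_le_ker : F₃ ≤ Ψ.ker := by
  show ⁅(⁅(⊤ : Subgroup F), ⊤⁆ : Subgroup F), ⊤⁆ ≤ Ψ.ker
  rw [Subgroup.commutator_le]
  intro g hg h _
  rw [MonoidHom.mem_ker, map_commutatorElement]
  have hc : Ψ h * Ψ g = Ψ g * Ψ h :=
    Subgroup.mem_centralizer_iff.mp (Heis_comm_central g hg) (Ψ h) (Ψ_mem h)
  rw [commutatorElement_def, ← hc]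
  group

/-- The induced homomorphism `ψ : H = F/F₃ → ℍ`. -/
def ψH : H →* Heis :=
  QuotientGroup.lift F₃ (Ψ.codRestrict Heis Ψ_mem)
    (fun g hg => by
      have : Ψ g = 1 := F₃_le_ker hg
      exact Subtype.ext (by simpa using this))

/-- The matrix of the image of `g ∈ H` in the Heisenberg group. -/
def mat (g : H) : Matrix (Fin 3) (Fin 3) ℤ := ((ψH g : (Matrix (Fin 3) (Fin 3) ℤ)ˣ) : Matrix (Fin 3) (Fin 3) ℤ)

/-- `a(g)`: the exponent sum of `α` in `g` (the `(0,1)` entry of the Heisenberg matrix). -/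
def aH (g : H) : ℤ := mat g 0 1

/-- `b(g)`: the exponent sum of `β` in `g` (the `(1,2)` entry of the Heisenberg matrix). -/
def bH (g : H) : ℤ := mat g 1 2

/-- The Heisenberg invariant `ν(g)` of `g ∈ H`: the exponent of the central element
`[α,β]` in the unique normal form `g = [α,β]^ν α^a β^b`. -/
def νH (g : H) : ℤ := mat g 0 2 - aH g * bH g

/-- `a(g)` for a word `g` in the free group. -/
def aF (g : F) : ℤ := aH (QuotientGroup.mk g)

/-- `b(g)` for a word `g` in the free group. -/
def bF (g : F) : ℤ := bH (QuotientGroup.mk g)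

/-- The Heisenberg invariant of a word in the free group: the Heisenberg invariant of its
image in `H = F/F₃`. -/
def νF (g : F) : ℤ := νH (QuotientGroup.mk g)

/-! Words in the letters α, α⁻¹, β, β⁻¹ and foldings (RNA secondary structures). -/

/-- A letter is a pair `(x, s)` (the `FreeGroup` convention): `s = true` for a generator,
`s = false` for its inverse. -/
abbrev Letter : Type := Bool × Bool

/-- A word in the letters `α`, `α⁻¹`, `β`, `β⁻¹`. -/
abbrev Word : Type := List Letter

/-- The letter `α`. -/
def lα : Letter := (false, true)
/-- The letter `α⁻¹`. -/
def lαinv : Letter := (false, false)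
/-- The letter `β`. -/
def lβ : Letter := (true, true)
/-- The letter `β⁻¹`. -/
def lβinv : Letter := (true, false)

/-- The exponent sum of `α` in a word: #`α` − #`α⁻¹`. -/
def aw (w : Word) : ℤ := (w.count lα : ℤ) - (w.count lαinv : ℤ)

/-- The exponent sum of `β` in a word: #`β` − #`β⁻¹`. -/
def bw (w : Word) : ℤ := (w.count lβ : ℤ) - (w.count lβinv : ℤ)

/-- The cyclic subword `w(i,j)` strictly between positions `i` and `j` (`0`-indexed),
read counterclockwise: if `i < j` it is `l_{i+1} ⋯ l_{j-1}`, and if `i > j` it is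
`l_{i+1} ⋯ l_n l_1 ⋯ l_{j-1}` (0-indexed: wraps around the end). -/
def between (w : Word) (i j : ℕ) : Word :=
  if i < j then (w.drop (i + 1)).take (j - i - 1) else w.drop (i + 1) ++ w.take j

/-- A folding (RNA secondary structure without pseudo-knots) of the cyclic word `w`:
a collection of disjoint pairs `(i,j)` of positions with `l_i ∈ {α, β}` and `l_j` the
inverse letter, subject to the non-nesting (no pseudo-knot) condition. -/
structure Folding (w : Word) where
  /-- The set of paired positions. -/
  pairs : Finset (Fin w.length × Fin w.length)
  ne : ∀ p ∈ pairs, p.1 ≠ p.2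
  matched : ∀ p ∈ pairs,
    (w.get p.1 = lα ∧ w.get p.2 = lαinv) ∨ (w.get p.1 = lβ ∧ w.get p.2 = lβinv)
  disjoint : ∀ p ∈ pairs, ∀ q ∈ pairs, p ≠ q →
    p.1 ≠ q.1 ∧ p.1 ≠ q.2 ∧ p.2 ≠ q.1 ∧ p.2 ≠ q.2
  nonnested : ∀ p ∈ pairs, ∀ q ∈ pairs,
    (p.1 < q.1 ∧ q.1 < p.2 → p.1 < q.2 ∧ q.2 < p.2) ∧
    (p.2 < q.1 ∧ q.1 < p.1 → p.2 < q.2 ∧ q.2 < p.1)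

/-- A complete `α`-folding: every pair is an `α`-pair and every occurrence of the
letter `α` is paired. -/
def Folding.IsCompleteAlpha {w : Word} (𝓕 : Folding w) : Prop :=
  (∀ p ∈ 𝓕.pairs, w.get p.1 = lα) ∧
    ∀ i : Fin w.length, w.get i = lα → ∃ p ∈ 𝓕.pairs, p.1 = i

/-! Among the positions carrying `α` or `α⁻¹` there are as many of the one as of the other, so
some `α` and some `α⁻¹` are adjacent in this set of positions. Pair them, delete them and recurse.
Since no remaining position lies strictly between two adjacent ones, the new pair crosses no
later pair; non-crossing is the non-nesting condition of a folding. -/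

open Finset

namespace Set

variable {α : Type*} [LinearOrder α]

theorem uIoo_subset_uIoo_of_mem {a b c : α} (h : c ∈ uIoo a b) : uIoo c b ⊆ uIoo a b := by
  intro x hx
  simp only [uIoo_eq_union, mem_union, mem_Ioo] at *
  grind

theorem mem_uIoo_iff_of_notMem {a b x y : α} (hx : x ∉ uIoo a b) (hy : y ∉ uIoo a b)
    (hxa : x ≠ a) (hxb : x ≠ b) (hya : y ≠ a) (hyb : y ≠ b) :
    a ∈ uIoo x y ↔ b ∈ uIoo x y := by
  simp only [uIoo_eq_union, mem_union, mem_Ioo] at *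
  grind

theorem ncard_inter_uIoo_lt {s : Set α} (hs : s.Finite) {a b c : α} (hcs : c ∈ s)
    (hc : c ∈ uIoo a b) : (s ∩ uIoo c b).ncard < (s ∩ uIoo a b).ncard :=
  ncard_lt_ncard ((ssubset_iff_of_subset (inter_subset_inter_right s
    (uIoo_subset_uIoo_of_mem hc))).2 ⟨c, ⟨hcs, hc⟩, fun h => left_notMem_uIoo h.2⟩)
    (hs.inter_of_left _)

end Set

theorem List.card_filter_get_eq_count {β : Type*} [BEq β] [LawfulBEq β] [DecidableEq β]
    (w : List β) (x : β) : #{i : Fin w.length | w.get i = x} = w.count x := by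
  obtain rfl := lawful_beq_subsingleton ‹BEq β› instBEqOfDecidableEq
  conv_rhs => rw [← List.ofFn_get w, ← Multiset.coe_count, ← Fin.univ_val_map, Multiset.count_map]
  simp [Finset.card_def, eq_comm]

section NoncrossingPairing

variable {α : Type*} [LinearOrder α]

theorem Finset.exists_adjacent_of_exists (σ : α → Prop) (s : Finset α) (hx : ∃ x ∈ s, σ x)
    (hy : ∃ y ∈ s, ¬ σ y) :
    ∃ u ∈ s, ∃ v ∈ s, σ u ∧ ¬ σ v ∧ ∀ c ∈ s, c ∉ Set.uIoo u v := by
  classical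
  -- take a pair with the fewest elements of `s` between them: any such element would give a
  -- pair with fewer
  obtain ⟨x, hxs, hσx⟩ := hx
  obtain ⟨y, hys, hσy⟩ := hy
  obtain ⟨⟨u, v⟩, huv, hmin⟩ := ((s.filter σ) ×ˢ (s.filter (¬ σ ·))).exists_min_image
    (fun p => ((s : Set α) ∩ Set.uIoo p.1 p.2).ncard) ⟨(x, y), by simp [*]⟩
  simp only [mem_product, mem_filter] at huv hmin
  obtain ⟨⟨hus, hσu⟩, hvs, hσv⟩ := huv
  refine ⟨u, hus, v, hvs, hσu, hσv, fun c hcs hc => ?_⟩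
  by_cases hσc : σ c
  · exact (hmin (c, v) ⟨⟨hcs, hσc⟩, hvs, hσv⟩).not_gt
      (Set.ncard_inter_uIoo_lt s.finite_toSet hcs hc)
  · have := Set.ncard_inter_uIoo_lt s.finite_toSet hcs (Set.uIoo_comm u v ▸ hc)
    rw [Set.uIoo_comm c, Set.uIoo_comm v] at this
    exact (hmin (u, c) ⟨⟨hus, hσu⟩, hcs, hσc⟩).not_gt this

structure IsNoncrossingPairing (σ : α → Prop) (s : Finset α) (M : Finset (α × α)) : Prop where
  fst_mem : ∀ p ∈ M, p.1 ∈ s ∧ σ p.1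
  snd_mem : ∀ p ∈ M, p.2 ∈ s ∧ ¬ σ p.2
  covers : ∀ i ∈ s, ∃ p ∈ M, p.1 = i ∨ p.2 = i
  injOn_fst : Set.InjOn Prod.fst (M : Set (α × α))
  injOn_snd : Set.InjOn Prod.snd (M : Set (α × α))
  noncrossing : ∀ p ∈ M, ∀ q ∈ M, q.1 ∈ Set.uIoo p.1 p.2 ↔ q.2 ∈ Set.uIoo p.1 p.2

namespace IsNoncrossingPairing

variable {σ : α → Prop} {s : Finset α} {M : Finset (α × α)}

theorem fst_ne_snd (hM : IsNoncrossingPairing σ s M) {p q : α × α} (hp : p ∈ M) (hq : q ∈ M) :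
    p.1 ≠ q.2 :=
  fun h => (hM.snd_mem q hq).2 (h ▸ (hM.fst_mem p hp).2)

theorem disjoint (hM : IsNoncrossingPairing σ s M) :
    ∀ p ∈ M, ∀ q ∈ M, p ≠ q → p.1 ≠ q.1 ∧ p.1 ≠ q.2 ∧ p.2 ≠ q.1 ∧ p.2 ≠ q.2 :=
  fun _p hp _q hq hpq => ⟨fun h => hpq (hM.injOn_fst hp hq h), hM.fst_ne_snd hp hq,
    (hM.fst_ne_snd hq hp).symm, fun h => hpq (hM.injOn_snd hp hq h)⟩

theorem nonnested (hM : IsNoncrossingPairing σ s M) : ∀ p ∈ M, ∀ q ∈ M,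
    (p.1 < q.1 ∧ q.1 < p.2 → p.1 < q.2 ∧ q.2 < p.2) ∧
    (p.2 < q.1 ∧ q.1 < p.1 → p.2 < q.2 ∧ q.2 < p.1) := by
  intro p hp q hq
  constructor
  · rintro ⟨h₁, h₂⟩
    have := (hM.noncrossing p hp q hq).1 (Set.mem_uIoo_of_lt h₁ h₂)
    rwa [Set.uIoo_of_lt (h₁.trans h₂)] at this
  · rintro ⟨h₁, h₂⟩
    have := (hM.noncrossing p hp q hq).1 (Set.mem_uIoo_of_gt h₁ h₂)
    rwa [Set.uIoo_of_gt (h₁.trans h₂)] at this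

theorem exists_fst_eq (hM : IsNoncrossingPairing σ s M) {i : α} (hi : i ∈ s) (hσ : σ i) :
    ∃ p ∈ M, p.1 = i := by
  obtain ⟨p, hp, h | h⟩ := hM.covers i hi
  · exact ⟨p, hp, h⟩
  · exact ((hM.snd_mem p hp).2 (h ▸ hσ)).elim

theorem empty : IsNoncrossingPairing σ ∅ ∅ :=
  ⟨by simp, by simp, by simp, by simp, by simp, by simp⟩

theorem insert {u v : α} (hus : u ∈ s) (hvs : v ∈ s) (hσu : σ u) (hσv : ¬ σ v)
    (hadj : ∀ c ∈ s, c ∉ Set.uIoo u v)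
    (hM : IsNoncrossingPairing σ ((s.erase u).erase v) M) :
    IsNoncrossingPairing σ s (insert (u, v) M) := by
  have hrest : ∀ i ∈ (s.erase u).erase v, i ∈ s ∧ i ≠ u ∧ i ≠ v := by
    intro i hi
    simp only [mem_erase] at hi
    exact ⟨hi.2.2, hi.2.1, hi.1⟩
  have hfst : ∀ p ∈ M, p.1 ∈ s ∧ p.1 ≠ u ∧ p.1 ≠ v := fun p hp => hrest _ (hM.fst_mem p hp).1
  have hsnd : ∀ p ∈ M, p.2 ∈ s ∧ p.2 ≠ u ∧ p.2 ≠ v := fun p hp => hrest _ (hM.snd_mem p hp).1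
  have hnew : (u, v) ∉ M := fun h => (hfst _ h).2.1 rfl
  refine ⟨?_, ?_, ?_, ?_, ?_, ?_⟩
  · simp only [mem_insert, forall_eq_or_imp]
    exact ⟨⟨hus, hσu⟩, fun p hp => ⟨(hfst p hp).1, (hM.fst_mem p hp).2⟩⟩
  · simp only [mem_insert, forall_eq_or_imp]
    exact ⟨⟨hvs, hσv⟩, fun p hp => ⟨(hsnd p hp).1, (hM.snd_mem p hp).2⟩⟩
  · intro i hi
    by_cases hiu : i = u
    · exact ⟨(u, v), mem_insert_self _ _, .inl hiu.symm⟩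
    by_cases hiv : i = v
    · exact ⟨(u, v), mem_insert_self _ _, .inr hiv.symm⟩
    obtain ⟨p, hp, hpi⟩ := hM.covers i (by simp [*])
    exact ⟨p, mem_insert_of_mem hp, hpi⟩
  · rw [coe_insert, Set.injOn_insert (by simpa using hnew)]
    exact ⟨hM.injOn_fst, fun ⟨p, hp, hpu⟩ => (hfst p hp).2.1 hpu⟩
  · rw [coe_insert, Set.injOn_insert (by simpa using hnew)]
    exact ⟨hM.injOn_snd, fun ⟨p, hp, hpv⟩ => (hsnd p hp).2.2 hpv⟩
  · simp only [mem_insert, forall_eq_or_imp]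
    refine ⟨⟨by simp, fun q hq => ?_⟩, fun p hp => ⟨?_, hM.noncrossing p hp⟩⟩
    · exact iff_of_false (hadj _ (hfst q hq).1) (hadj _ (hsnd q hq).1)
    · exact Set.mem_uIoo_iff_of_notMem (hadj _ (hfst p hp).1) (hadj _ (hsnd p hp).1)
        (hfst p hp).2.1 (hfst p hp).2.2 (hsnd p hp).2.1 (hsnd p hp).2.2

end IsNoncrossingPairing

theorem Finset.exists_isNoncrossingPairing (σ : α → Prop) [DecidablePred σ] (s : Finset α)
    (hs : #{i ∈ s | σ i} = #{i ∈ s | ¬ σ i}) : ∃ M, IsNoncrossingPairing σ s M := by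
  induction s using Finset.strongInduction with
  | H s ih =>
  rcases s.eq_empty_or_nonempty with rfl | hne
  · exact ⟨∅, IsNoncrossingPairing.empty⟩
  have hpos : 0 < #{i ∈ s | σ i} := by
    have := s.card_filter_add_card_filter_not (fun i => σ i)
    have := hne.card_pos
    omega
  obtain ⟨x, hx⟩ := card_pos.1 hpos
  obtain ⟨y, hy⟩ := card_pos.1 (hs ▸ hpos)
  obtain ⟨u, hus, v, hvs, hσu, hσv, hadj⟩ :=
    s.exists_adjacent_of_exists σ ⟨x, (mem_filter.1 hx)⟩ ⟨y, (mem_filter.1 hy)⟩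
  have hσ : {i ∈ (s.erase u).erase v | σ i} = {i ∈ s | σ i}.erase u := by
    ext i; simp only [mem_filter, mem_erase]; grind
  have hnσ : {i ∈ (s.erase u).erase v | ¬ σ i} = {i ∈ s | ¬ σ i}.erase v := by
    ext i; simp only [mem_filter, mem_erase]; grind
  have hcard : #{i ∈ (s.erase u).erase v | σ i} = #{i ∈ (s.erase u).erase v | ¬ σ i} := by
    rw [hσ, hnσ, card_erase_of_mem (by simp [*]), card_erase_of_mem (by simp [*]), hs]
  obtain ⟨M, hM⟩ := ih _ ((erase_subset v _).trans_ssubset (erase_ssubset hus)) hcard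
  exact ⟨_, hM.insert hus hvs hσu hσv hadj⟩

end NoncrossingPairing

theorem mat_mk (g : F) : mat (QuotientGroup.mk g) = (Ψ g : Matrix (Fin 3) (Fin 3) ℤ) :=
  rfl

theorem aw_append (w₁ w₂ : Word) : aw (w₁ ++ w₂) = aw w₁ + aw w₂ := by
  simp only [aw, List.count_append]
  push_cast
  ring

theorem Ψ_mk_singleton_eq_Munit (x : Letter) :
    ∃ b c, Ψ (FreeGroup.mk [x]) = Munit (aw [x]) b c := by
  obtain ⟨y, e⟩ := x
  cases y <;> cases e <;> simp [Ψ, FreeGroup.lift_mk, Munit_inv, aw, lα, lαinv]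

theorem Ψ_mk_eq_Munit (w : Word) : ∃ b c, Ψ (FreeGroup.mk w) = Munit (aw w) b c := by
  induction w with
  | nil => exact ⟨0, 0, by simp [aw, ← FreeGroup.one_eq_mk, Munit_one]⟩
  | cons x l ih =>
    obtain ⟨b, c, hl⟩ := ih
    obtain ⟨b', c', hx⟩ := Ψ_mk_singleton_eq_Munit x
    rw [← List.singleton_append, ← FreeGroup.mul_mk, map_mul, hl, hx, Munit_mul, aw_append]
    exact ⟨_, _, rfl⟩

theorem aF_mk (w : Word) : aF (FreeGroup.mk w) = aw w := by
  obtain ⟨b, c, h⟩ := Ψ_mk_eq_Munit w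
  rw [aF, aH, mat_mk, h]
  simp [Munit, Mmat]

/-- if `g` is a word with `a(g) = 0`, then there exists a complete
`α`-folding of `g`: a folding in which only `α`-pairs occur and every occurrence of the
letter `α` is paired. -/
theorem statement_17 (w : Word) (ha : aF (FreeGroup.mk w) = 0) :
    ∃ 𝓕 : Folding w, 𝓕.IsCompleteAlpha := by
  set s : Finset (Fin w.length) := {i | w.get i = lα ∨ w.get i = lαinv}
  have hne : lα ≠ lαinv := by decide
  have hs : #{i ∈ s | w.get i = lα} = #{i ∈ s | ¬ w.get i = lα} := by
    rw [aF_mk, aw, sub_eq_zero, Nat.cast_inj, ← w.card_filter_get_eq_count,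
      ← w.card_filter_get_eq_count] at ha
    convert ha using 2 <;> ext i <;> simp only [s, mem_filter, mem_univ, true_and] <;> grind
  obtain ⟨M, hM⟩ := s.exists_isNoncrossingPairing _ hs
  have hsnd : ∀ p ∈ M, w.get p.2 = lαinv := fun p hp => by
    have := hM.snd_mem p hp
    simp only [s, mem_filter, mem_univ, true_and] at this
    tauto
  exact ⟨⟨M, fun p hp => hM.fst_ne_snd hp hp, fun p hp => .inl ⟨(hM.fst_mem p hp).2, hsnd p hp⟩,
    hM.disjoint, hM.nonnested⟩, fun p hp => (hM.fst_mem p hp).2,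
    fun i hi => hM.exists_fst_eq (mem_filter.2 ⟨mem_univ i, .inl hi⟩) hi⟩

end
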